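/- Let P be a locally finite partially ordered set with a weak rank function r, and let ζ be the element of the incidence algebra of P over ℤ[t] with ζ x y = 1 for all x ≤ y. Then ζ is a unit, and χ := ζ^{-1} * \bar ζ is a P-kernel: χ x x = 1 for all x, deg(χ x y) ≤ r x y for all x ≤ y, and \bar χ * χ = δ. -/

import Mathlib

/-!
The Möbius function `μ = ζ⁻¹` has constant entries, so `χ = μ * ζ̄` has `deg (χ x y) ≤ r x y`.
Since the bar map is multiplicative on functions with `deg (f x y) ≤ r x y` (this is where
additivity of `r` enters) and is an involution,
`χ̄ * χ = (μ̄ * ζ) * (μ * ζ̄) = μ̄ * ζ̄ = (μ * ζ)‾ = 1̄ = 1`.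
-/

open Finset Polynomial

/-- The bar involution on the incidence algebra of `P` over `ℤ[t]` relative to a weak rank
function `r`: it sends `f` to the function `x y ↦ t^(r x y) · (f x y)(t⁻¹)`, i.e. the
reflection of `f x y` at degree `r x y`. -/
noncomputable def IncidenceAlgebra.bar {P : Type*} [PartialOrder P] [LocallyFiniteOrder P]
    (r : P → P → ℕ) (f : IncidenceAlgebra (Polynomial ℤ) P) :
    IncidenceAlgebra (Polynomial ℤ) P :=
  ⟨fun x y => (f x y).reflect (r x y), fun x y h => by
    try simp only []
    rw [IncidenceAlgebra.apply_eq_zero_of_not_le h, Polynomial.reflect_zero]⟩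

lemma Polynomial.reflect_sum {R ι : Type*} [Semiring R] (N : ℕ) (s : Finset ι) (p : ι → R[X]) :
    (∑ i ∈ s, p i).reflect N = ∑ i ∈ s, (p i).reflect N :=
  map_sum (⟨⟨reflect N, reflect_zero⟩, fun f g => reflect_add f g N⟩ : R[X] →+ R[X]) p s

namespace IncidenceAlgebra

variable {P : Type*} [PartialOrder P]

def NatDegreeLE {R : Type*} [Semiring R] (r : P → P → ℕ) (f : IncidenceAlgebra R[X] P) : Prop :=
  ∀ x y, x ≤ y → (f x y).natDegree ≤ r x y

lemma natDegreeLE_of_natDegree_eq_zero {R : Type*} [Semiring R] {r : P → P → ℕ}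
    {f : IncidenceAlgebra R[X] P} (hf : ∀ x y, (f x y).natDegree = 0) : NatDegreeLE r f :=
  fun x y _ => (hf x y).trans_le (Nat.zero_le _)

lemma natDegreeLE_zeta {R : Type*} [Semiring R] {r : P → P → ℕ} [DecidableLE P] :
    NatDegreeLE r (zeta R[X] : IncidenceAlgebra R[X] P) :=
  natDegreeLE_of_natDegree_eq_zero fun x y => by
    rw [zeta_apply]; split_ifs <;> simp

variable [LocallyFiniteOrder P]

lemma mu_polynomial_apply {R : Type*} [Ring R] [DecidableEq P] (x y : P) :
    mu R[X] x y = C (mu R x y) := by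
  classical
  let muC : IncidenceAlgebra R[X] P :=
    ⟨fun a b => C (mu R a b), fun a b h => by simp [apply_eq_zero_of_not_le h]⟩
  have muC_mul_zeta : muC * zeta R[X] = 1 := by
    refine IncidenceAlgebra.ext fun a b _ => ?_
    calc (muC * zeta R[X] : IncidenceAlgebra R[X] P) a b = C (∑ z ∈ Icc a b, mu R a z) := by
          rw [mul_apply, map_sum]
          refine sum_congr rfl fun z hz => ?_
          simp [muC, (mem_Icc.1 hz).2]
      _ = (1 : IncidenceAlgebra R[X] P) a b := by
          rw [sum_Icc_mu_right]; split_ifs <;> simp [*]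
  rw [← left_inv_eq_right_inv muC_mul_zeta zeta_mul_mu]
  rfl

lemma natDegreeLE_mu {R : Type*} [Ring R] {r : P → P → ℕ} [DecidableEq P] :
    NatDegreeLE r (mu R[X] : IncidenceAlgebra R[X] P) :=
  natDegreeLE_of_natDegree_eq_zero fun x y => by rw [mu_polynomial_apply, natDegree_C]

lemma NatDegreeLE.mul {R : Type*} [Semiring R] {r : P → P → ℕ}
    (hr_add : ∀ x y z, x ≤ y → y ≤ z → r x y + r y z = r x z)
    {f g : IncidenceAlgebra R[X] P} (hf : NatDegreeLE r f) (hg : NatDegreeLE r g) :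
    NatDegreeLE r (f * g) := by
  intro x y hxy
  rw [mul_apply]
  refine natDegree_sum_le_of_forall_le _ _ fun z hz => ?_
  obtain ⟨hxz, hzy⟩ := mem_Icc.1 hz
  calc (f x z * g z y).natDegree ≤ (f x z).natDegree + (g z y).natDegree := natDegree_mul_le
    _ ≤ r x z + r z y := add_le_add (hf x z hxz) (hg z y hzy)
    _ = r x y := hr_add x z y hxz hzy

section Bar

variable {r : P → P → ℕ}

@[simp] lemma bar_apply (f : IncidenceAlgebra ℤ[X] P) (x y : P) :
    bar r f x y = (f x y).reflect (r x y) := rfl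

@[simp] lemma bar_bar (f : IncidenceAlgebra ℤ[X] P) : bar r (bar r f) = f := by
  ext x y
  simp

lemma NatDegreeLE.bar {f : IncidenceAlgebra ℤ[X] P} (hf : NatDegreeLE r f) :
    NatDegreeLE r (bar r f) := fun x y hxy =>
  natDegree_reflect_le.trans (max_le le_rfl (hf x y hxy))

lemma bar_one [DecidableEq P] (hr_self : ∀ x, r x x = 0) :
    bar r (1 : IncidenceAlgebra ℤ[X] P) = 1 := by
  refine IncidenceAlgebra.ext fun x y _ => ?_
  rw [bar_apply, one_apply]
  split_ifs with hxy
  · rw [hxy, hr_self, reflect_one, pow_zero]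
  · exact reflect_zero

lemma bar_mul (hr_add : ∀ x y z, x ≤ y → y ≤ z → r x y + r y z = r x z)
    {f g : IncidenceAlgebra ℤ[X] P} (hf : NatDegreeLE r f) (hg : NatDegreeLE r g) :
    bar r (f * g) = bar r f * bar r g := by
  refine IncidenceAlgebra.ext fun x y _ => ?_
  rw [bar_apply, mul_apply, mul_apply, reflect_sum]
  refine sum_congr rfl fun z hz => ?_
  obtain ⟨hxz, hzy⟩ := mem_Icc.1 hz
  rw [bar_apply, bar_apply, ← hr_add x z y hxz hzy, reflect_mul _ _ (hf x z hxz) (hg z y hzy)]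

end Bar

end IncidenceAlgebra

open IncidenceAlgebra in
theorem zeta_unit_and_characteristic_function_is_kernel_general {P : Type*} [PartialOrder P]
    [LocallyFiniteOrder P] [DecidableEq P] [DecidableRel (α := P) (· ≤ ·)]
    (r : P → P → ℕ)
    (hr_add : ∀ x y z : P, x ≤ y → y ≤ z → r x y + r y z = r x z) :
    IsUnit (IncidenceAlgebra.zeta (Polynomial ℤ) (α := P)) ∧
      ∀ χ : IncidenceAlgebra (Polynomial ℤ) P,
        χ = Ring.inverse (IncidenceAlgebra.zeta (Polynomial ℤ)) *
              IncidenceAlgebra.bar r (IncidenceAlgebra.zeta (Polynomial ℤ)) →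
          (∀ x : P, χ x x = 1) ∧
          (∀ x y : P, x ≤ y → (χ x y).natDegree ≤ r x y) ∧
          IncidenceAlgebra.bar r χ * χ = 1 := by
  set ζ : IncidenceAlgebra ℤ[X] P := zeta ℤ[X]
  set μ : IncidenceAlgebra ℤ[X] P := mu ℤ[X]
  have hr_self : ∀ x, r x x = 0 := fun x => by have := hr_add x x x le_rfl le_rfl; omega
  let ζ_unit : (IncidenceAlgebra ℤ[X] P)ˣ := ⟨ζ, μ, zeta_mul_mu, mu_mul_zeta _ _⟩
  refine ⟨ζ_unit.isUnit, fun χ hχ => ?_⟩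
  rw [show Ring.inverse ζ = μ from Ring.inverse_unit ζ_unit] at hχ
  subst hχ
  have hμ : NatDegreeLE r μ := natDegreeLE_mu
  have hζ : NatDegreeLE r ζ := natDegreeLE_zeta
  refine ⟨fun x => ?_, (hμ.mul hr_add hζ.bar :), ?_⟩
  · simp [μ, ζ, hr_self, reflect_one]
  · calc bar r (μ * bar r ζ) * (μ * bar r ζ) = bar r μ * (ζ * μ) * bar r ζ := by
          rw [bar_mul hr_add hμ hζ.bar, bar_bar]; simp only [mul_assoc]
      _ = bar r (μ * ζ) := by rw [zeta_mul_mu, mul_one, bar_mul hr_add hμ hζ]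
      _ = 1 := by rw [mu_mul_zeta, bar_one hr_self]

/-- For a locally finite poset `P` with weak rank function `r`, the zeta function `ζ`
(with `ζ x y = 1` for all `x ≤ y`) is a unit of the incidence algebra of `P` over `ℤ[t]`,
and `χ := ζ⁻¹ * ζ̄` is a `P`-kernel: `χ x x = 1` for all `x`, `deg (χ x y) ≤ r x y` for
all `x ≤ y`, and `χ̄ * χ = δ`. -/
theorem zeta_unit_and_characteristic_function_is_kernel {P : Type*} [PartialOrder P]
    [LocallyFiniteOrder P] [DecidableEq P] [DecidableRel (α := P) (· ≤ ·)]
    (r : P → P → ℕ)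
    (hr_pos : ∀ x y : P, x < y → 0 < r x y)
    (hr_add : ∀ x y z : P, x ≤ y → y ≤ z → r x y + r y z = r x z) :
    IsUnit (IncidenceAlgebra.zeta (Polynomial ℤ) (α := P)) ∧
      ∀ χ : IncidenceAlgebra (Polynomial ℤ) P,
        χ = Ring.inverse (IncidenceAlgebra.zeta (Polynomial ℤ)) *
              IncidenceAlgebra.bar r (IncidenceAlgebra.zeta (Polynomial ℤ)) →
          (∀ x : P, χ x x = 1) ∧
          (∀ x y : P, x ≤ y → (χ x y).natDegree ≤ r x y) ∧
          IncidenceAlgebra.bar r χ * χ = 1 :=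
  zeta_unit_and_characteristic_function_is_kernel_general r hr_add
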